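/- Let μ = e^{−V}dx be a probability measure on ℝ^d with V = V₀ + V₁ where |V₀| ≤ c is globally bounded and V₁ is smooth with ∫|∇V₁| dμ < ∞. Let Φ : ℝ^d → ℝ be smooth convex with |∇Φ| ≤ R. Then for every y ∈ ℝ^d, ∫ e^{−V(x)} ΔΦ(x+y) dx ≤ e^{2c} R ∫ |∇V₁| dμ. -/

import Mathlib

open MeasureTheory Real

/-- The Laplacian of `Φ` at `x`, as the trace of the Hessian in the coordinate basis. -/
noncomputable def euclideanLaplacian {d : ℕ} (Φ : EuclideanSpace ℝ (Fin d) → ℝ)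
    (x : EuclideanSpace ℝ (Fin d)) : ℝ :=
  ∑ i : Fin d,
    fderiv ℝ (fun z => fderiv ℝ Φ z (EuclideanSpace.single i 1)) x (EuclideanSpace.single i 1)

open Topology
open scoped ENNReal NNReal RealInnerProductSpace

lemma oneDim {g p h : ℝ → ℝ} (hp : Continuous p) (hh : Continuous h)
    (hg' : ∀ t, HasDerivAt g (p t - h t) t) (hp0 : ∀ t, 0 ≤ p t)
    (hgint : ∫⁻ t, ENNReal.ofReal |g t| ≠ ⊤) :
    ∫⁻ t, ENNReal.ofReal (p t) ≤ ∫⁻ t, ENNReal.ofReal |h t| := by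
  by_cases hhtop : ∫⁻ t, ENNReal.ofReal |h t| = ⊤
  · simp [hhtop]
  -- continuity and integrability of g
  have hgc : Continuous g := by
    rw [continuous_iff_continuousAt]
    exact fun t => (hg' t).differentiableAt.continuousAt
  have hgi : Integrable g := by
    refine ⟨hgc.aestronglyMeasurable, ?_⟩
    rw [hasFiniteIntegral_iff_norm]
    simpa [Real.norm_eq_abs] using lt_top_iff_ne_top.2 hgint
  have hhi : Integrable h := by
    refine ⟨hh.aestronglyMeasurable, ?_⟩
    rw [hasFiniteIntegral_iff_norm]
    simpa [Real.norm_eq_abs] using lt_top_iff_ne_top.2 hhtop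
  have hIh : ENNReal.ofReal (∫ t, |h t|) = ∫⁻ t, ENNReal.ofReal |h t| :=
    ofReal_integral_eq_lintegral_ofReal hhi.abs (ae_of_all _ fun t => abs_nonneg _)
  -- the key finite-interval bound
  have key : ∀ T : ℝ, 0 < T →
      ∫⁻ t in Set.Ioc (-T) T, ENNReal.ofReal (p t)
        ≤ ENNReal.ofReal (|g T| + |g (-T)|) + ∫⁻ t, ENNReal.ofReal |h t| := by
    intro T hT
    have hle : -T ≤ T := by linarith
    have hftc : ∫ t in (-T)..T, (p t - h t) = g T - g (-T) :=
      intervalIntegral.integral_eq_sub_of_hasDerivAt (fun t _ => hg' t)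
        ((hp.sub hh).intervalIntegrable _ _)
    have hsplit : ∫ t in (-T)..T, (p t - h t)
        = (∫ t in (-T)..T, p t) - ∫ t in (-T)..T, h t :=
      intervalIntegral.integral_sub (hp.intervalIntegrable _ _) (hh.intervalIntegrable _ _)
    have hhb : ∫ t in (-T)..T, h t ≤ ∫ t, |h t| := by
      rw [intervalIntegral.integral_of_le hle]
      refine le_trans (integral_mono hhi.integrableOn hhi.abs.integrableOn
        (fun t => le_abs_self _)) ?_
      exact setIntegral_le_integral hhi.abs (ae_of_all _ fun t => abs_nonneg _)
    have hpb : ∫ t in (-T)..T, p t ≤ |g T| + |g (-T)| + ∫ t, |h t| := by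
      have : ∫ t in (-T)..T, p t = g T - g (-T) + ∫ t in (-T)..T, h t := by
        rw [hsplit] at hftc; linarith
      rw [this]
      have h1 := le_abs_self (g T)
      have h2 := neg_abs_le (g (-T))
      linarith
    have hplint : ∫⁻ t in Set.Ioc (-T) T, ENNReal.ofReal (p t)
        = ENNReal.ofReal (∫ t in Set.Ioc (-T) T, p t) := by
      rw [ofReal_integral_eq_lintegral_ofReal (hp.integrableOn_Ioc)
        (ae_of_all _ fun t => hp0 t)]
    rw [hplint, ← intervalIntegral.integral_of_le hle]
    calc ENNReal.ofReal (∫ t in (-T)..T, p t)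
        ≤ ENNReal.ofReal (|g T| + |g (-T)| + ∫ t, |h t|) := ENNReal.ofReal_le_ofReal hpb
      _ ≤ ENNReal.ofReal (|g T| + |g (-T)|) + ENNReal.ofReal (∫ t, |h t|) :=
          ENNReal.ofReal_add_le
      _ = ENNReal.ofReal (|g T| + |g (-T)|) + ∫⁻ t, ENNReal.ofReal |h t| := by rw [hIh]
  -- existence of good levels
  have seq : ∀ n : ℕ, ∃ T : ℝ, ((n : ℝ) + 1 ≤ T ∧ |g T| + |g (-T)| < 1 / ((n : ℝ) + 1)) := by
    intro n
    by_contra hcon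
    push_neg at hcon
    have hbig : (⊤ : ℝ≥0∞) ≤ ∫⁻ t in Set.Ici ((n : ℝ) + 1),
        ENNReal.ofReal (|g t| + |g (-t)|) := by
      have hconst : ∫⁻ _ in Set.Ici ((n : ℝ) + 1),
          (ENNReal.ofReal (1 / ((n : ℝ) + 1))) = ⊤ := by
        rw [setLIntegral_const]
        rw [Real.volume_Ici, ENNReal.mul_top]
        simp only [ne_eq, ENNReal.ofReal_eq_zero, not_le]
        positivity
      rw [← hconst]
      refine setLIntegral_mono ((((hgc.abs).add ((hgc.comp continuous_neg).abs)).measurable).ennreal_ofReal) ?_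
      intro t ht
      exact ENNReal.ofReal_le_ofReal (hcon t ht)
    have hsmall : ∫⁻ t in Set.Ici ((n : ℝ) + 1), ENNReal.ofReal (|g t| + |g (-t)|) < ⊤ := by
      have hb : ∫⁻ t in Set.Ici ((n : ℝ) + 1), ENNReal.ofReal (|g t| + |g (-t)|)
          ≤ ∫⁻ t, ENNReal.ofReal (|g t| + |g (-t)|) :=
        lintegral_mono' Measure.restrict_le_self le_rfl
      have hadd : ∫⁻ t, ENNReal.ofReal (|g t| + |g (-t)|)
          = (∫⁻ t, ENNReal.ofReal |g t|) + ∫⁻ t, ENNReal.ofReal |g (-t)| := by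
        rw [← lintegral_add_left ((hgc.abs.measurable).ennreal_ofReal)]
        congr 1
        ext t
        rw [ENNReal.ofReal_add (abs_nonneg _) (abs_nonneg _)]
      have hneg : ∫⁻ t, ENNReal.ofReal |g (-t)| = ∫⁻ t, ENNReal.ofReal |g t| := by
        exact (Measure.measurePreserving_neg volume).lintegral_comp
          ((hgc.abs.measurable).ennreal_ofReal)
      refine lt_of_le_of_lt hb ?_
      rw [hadd, hneg]
      exact ENNReal.add_lt_top.2 ⟨lt_top_iff_ne_top.2 hgint, lt_top_iff_ne_top.2 hgint⟩
    exact (lt_irrefl _ (lt_of_le_of_lt hbig hsmall)).elim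
  choose T hT1 hT2 using seq
  -- monotone convergence
  have hsup : ∫⁻ t, ENNReal.ofReal (p t)
      = ⨆ m : ℕ, ∫⁻ t in Set.Ioc (-((m : ℝ) + 1)) ((m : ℝ) + 1), ENNReal.ofReal (p t) := by
    have hmeas : ∀ m : ℕ, Measurable fun t =>
        Set.indicator (Set.Ioc (-((m : ℝ) + 1)) ((m : ℝ) + 1))
          (fun t => ENNReal.ofReal (p t)) t := by
      intro m
      exact (hp.measurable.ennreal_ofReal).indicator measurableSet_Ioc
    have hmono : Monotone fun m : ℕ => Set.indicator
        (Set.Ioc (-((m : ℝ) + 1)) ((m : ℝ) + 1)) (fun t => ENNReal.ofReal (p t)) := by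
      intro a b hab
      refine Set.indicator_le_indicator_of_subset ?_ (fun t => zero_le)
      have hab' : (a : ℝ) ≤ b := by exact_mod_cast hab
      exact Set.Ioc_subset_Ioc (by linarith) (by linarith)
    calc ∫⁻ t, ENNReal.ofReal (p t)
        = ∫⁻ t, ⨆ m : ℕ, Set.indicator (Set.Ioc (-((m : ℝ) + 1)) ((m : ℝ) + 1))
            (fun t => ENNReal.ofReal (p t)) t := by
          congr 1
          ext t
          refine le_antisymm ?_ (iSup_le fun m => Set.indicator_le_self _ _ t)
          obtain ⟨m, hm⟩ := exists_nat_gt |t|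
          refine le_trans (le_of_eq ?_) (le_iSup _ m)
          rw [Set.indicator_of_mem]
          constructor
          · have := abs_nonneg t; have := neg_abs_le t; linarith
          · have := le_abs_self t; linarith
      _ = ⨆ m : ℕ, ∫⁻ t, Set.indicator (Set.Ioc (-((m : ℝ) + 1)) ((m : ℝ) + 1))
            (fun t => ENNReal.ofReal (p t)) t := lintegral_iSup hmeas hmono
      _ = ⨆ m : ℕ, ∫⁻ t in Set.Ioc (-((m : ℝ) + 1)) ((m : ℝ) + 1), ENNReal.ofReal (p t) := by
          congr 1; ext m; rw [lintegral_indicator measurableSet_Ioc]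
  rw [hsup]
  refine iSup_le fun m => ?_
  refine ENNReal.le_of_forall_pos_le_add fun ε hε hfin => ?_
  obtain ⟨n₀, hn₀⟩ := exists_nat_gt (1 / (ε : ℝ))
  set n := max m n₀ with hn
  have hTn : ((m : ℝ) + 1) ≤ T n := by
    have h0 : (m : ℝ) ≤ (n : ℝ) := by exact_mod_cast le_max_left m n₀
    linarith [hT1 n]
  have hTpos : 0 < T n := lt_of_lt_of_le (by positivity) (hT1 n)
  have hsub : Set.Ioc (-((m : ℝ) + 1)) ((m : ℝ) + 1) ⊆ Set.Ioc (-(T n)) (T n) :=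
    Set.Ioc_subset_Ioc (by linarith) hTn
  have hGsmall : |g (T n)| + |g (-(T n))| < (ε : ℝ) := by
    have h1 : 1 / ((n : ℝ) + 1) ≤ 1 / ((n₀ : ℝ) + 1) := by
      apply one_div_le_one_div_of_le (by positivity)
      have : (n₀ : ℝ) ≤ (n : ℝ) := by exact_mod_cast le_max_right m n₀
      linarith
    have h2 : 1 / ((n₀ : ℝ) + 1) < (ε : ℝ) := by
      rw [div_lt_iff₀ (by positivity)]
      have hεpos : (0 : ℝ) < ε := hε
      calc (1 : ℝ) = ε * (1/ε) := by field_simp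
        _ < ε * ((n₀ : ℝ) + 1) := by
            apply mul_lt_mul_of_pos_left _ hεpos
            linarith
      
    exact lt_of_lt_of_le (hT2 n) (le_of_lt (lt_of_le_of_lt h1 h2))
  calc ∫⁻ t in Set.Ioc (-((m : ℝ) + 1)) ((m : ℝ) + 1), ENNReal.ofReal (p t)
      ≤ ∫⁻ t in Set.Ioc (-(T n)) (T n), ENNReal.ofReal (p t) := lintegral_mono_set hsub
    _ ≤ ENNReal.ofReal (|g (T n)| + |g (-(T n))|) + ∫⁻ t, ENNReal.ofReal |h t| :=
        key (T n) hTpos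
    _ ≤ (ε : ℝ≥0∞) + ∫⁻ t, ENNReal.ofReal |h t| := by
        gcongr
        calc ENNReal.ofReal (|g (T n)| + |g (-(T n))|) ≤ ENNReal.ofReal (ε : ℝ) :=
            ENNReal.ofReal_le_ofReal (le_of_lt hGsmall)
          _ = (ε : ℝ≥0∞) := ENNReal.ofReal_coe_nnreal
    _ = (∫⁻ t, ENNReal.ofReal |h t|) + (ε : ℝ≥0∞) := add_comm _ _

lemma slice_lintegral_le {d : ℕ} (A B C : (Fin d → ℝ) → ℝ≥0∞)
    (hA : Measurable A) (hB : Measurable B) (hC : Measurable C)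
    (hBfin : ∫⁻ x, B x ≠ ⊤) (hCfin : ∫⁻ x, C x ≠ ⊤) (i : Fin d)
    (key : ∀ x : Fin d → ℝ, (∫⁻ t, B (Function.update x i t)) ≠ ⊤ →
      (∫⁻ t, C (Function.update x i t)) ≠ ⊤ →
      ∫⁻ t, A (Function.update x i t) ≤ ∫⁻ t, B (Function.update x i t)) :
    ∫⁻ x, A x ≤ ∫⁻ x, B x := by
  classical
  set s : Finset (Fin d) := Finset.univ.erase i with hs
  have hins : (Finset.univ : Finset (Fin d)) = insert i s :=
    (Finset.insert_erase (Finset.mem_univ i)).symm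
  have hnotmem : i ∉ s := Finset.notMem_erase i _
  have hmeas_int : ∀ (F : (Fin d → ℝ) → ℝ≥0∞), Measurable F →
      Measurable (fun x => ∫⁻ t, F (Function.update x i t)) := by
    intro F hF
    exact Measurable.lintegral_prod_right (hF.comp measurable_update')
  have hmarg : ∀ (F : (Fin d → ℝ) → ℝ≥0∞), Measurable F →
      ∫⁻ x, F x = ∫⁻ y : ∀ j : s, ℝ,
        (∫⁻ t, F (Function.update (Function.updateFinset 0 s y) i t))
        ∂(Measure.pi fun _ => volume) := by
    intro F hF
    have h1 : ∫⁻ x, F x = (∫⋯∫⁻_Finset.univ, F ∂(fun _ => (volume : Measure ℝ))) 0 := by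
      rw [MeasureTheory.volume_pi]
      exact lintegral_eq_lmarginal_univ 0
    rw [h1, hins, lmarginal_insert' _ hF hnotmem]
    rfl
  rw [hmarg A hA, hmarg B hB]
  have hBae : ∀ᵐ y : (∀ j : s, ℝ) ∂(Measure.pi fun _ => volume),
      (∫⁻ t, B (Function.update (Function.updateFinset 0 s y) i t)) ≠ ⊤ := by
    have hfin : ∫⁻ y : ∀ j : s, ℝ,
        (∫⁻ t, B (Function.update (Function.updateFinset 0 s y) i t))
        ∂(Measure.pi fun _ => volume) ≠ ⊤ := by rw [← hmarg B hB]; exact hBfin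
    have hm : Measurable (fun y : ∀ j : s, ℝ =>
        ∫⁻ t, B (Function.update (Function.updateFinset 0 s y) i t)) :=
      (hmeas_int B hB).comp measurable_updateFinset
    exact (ae_lt_top hm hfin).mono fun y hy => hy.ne
  have hCae : ∀ᵐ y : (∀ j : s, ℝ) ∂(Measure.pi fun _ => volume),
      (∫⁻ t, C (Function.update (Function.updateFinset 0 s y) i t)) ≠ ⊤ := by
    have hfin : ∫⁻ y : ∀ j : s, ℝ,
        (∫⁻ t, C (Function.update (Function.updateFinset 0 s y) i t))
        ∂(Measure.pi fun _ => volume) ≠ ⊤ := by rw [← hmarg C hC]; exact hCfin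
    have hm : Measurable (fun y : ∀ j : s, ℝ =>
        ∫⁻ t, C (Function.update (Function.updateFinset 0 s y) i t)) :=
      (hmeas_int C hC).comp measurable_updateFinset
    exact (ae_lt_top hm hfin).mono fun y hy => hy.ne
  refine lintegral_mono_ae ?_
  filter_upwards [hBae, hCae] with y h1 h2
  exact key _ h1 h2

lemma monotone_hasDerivAt_nonneg {ψ : ℝ → ℝ} {a : ℝ} (hmono : Monotone ψ)
    (hd : HasDerivAt ψ a 0) : 0 ≤ a := by
  have h1 : HasDerivWithinAt ψ a (Set.Ioi 0) 0 := hd.hasDerivWithinAt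
  rw [hasDerivWithinAt_iff_tendsto_slope] at h1
  have hne : (𝓝[(Set.Ioi (0:ℝ)) \ {0}] 0).NeBot := by
    rw [Set.diff_singleton_eq_self (by simp)]
    exact nhdsGT_neBot 0
  refine ge_of_tendsto h1 ?_
  filter_upwards [self_mem_nhdsWithin] with t ht
  rcases ht with ⟨ht1, -⟩
  have ht0 : (0:ℝ) < t := ht1
  rw [slope_def_field]
  have : ψ 0 ≤ ψ t := hmono (le_of_lt ht0)
  rw [div_nonneg_iff]
  left
  constructor <;> simp [sub_nonneg] <;> linarith

lemma line_hasDerivAt {d : ℕ} (z v : EuclideanSpace ℝ (Fin d)) (t : ℝ) :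
    HasDerivAt (fun t : ℝ => z + t • v) v t := by
  simpa using ((hasDerivAt_id t).smul_const v).const_add z

lemma second_deriv_nonneg {d : ℕ} {Φ : EuclideanSpace ℝ (Fin d) → ℝ}
    (hΦsmooth : ContDiff ℝ (⊤ : ℕ∞) Φ) (hΦconv : ConvexOn ℝ Set.univ Φ)
    (v z : EuclideanSpace ℝ (Fin d)) :
    0 ≤ fderiv ℝ (fun w => fderiv ℝ Φ w v) z v := by
  set D : EuclideanSpace ℝ (Fin d) → ℝ := fun w => fderiv ℝ Φ w v with hD
  have hDsmooth : ContDiff ℝ (⊤ : ℕ∞) D := by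
    have h1 : ContDiff ℝ (⊤ : ℕ∞) (fderiv ℝ Φ) := hΦsmooth.fderiv_right (by simp)
    exact h1.clm_apply contDiff_const
  set φ : ℝ → ℝ := fun t => Φ (z + t • v) with hφ
  have hφd : ∀ t : ℝ, HasDerivAt φ (D (z + t • v)) t := by
    intro t
    exact ((hΦsmooth.differentiable (by simp)) (z + t • v)).hasFDerivAt.comp_hasDerivAt t
      (line_hasDerivAt z v t)
  have hφconv : ConvexOn ℝ Set.univ φ := by
    have A : AffineMap ℝ ℝ (EuclideanSpace ℝ (Fin d)) := by
      exact AffineMap.lineMap z (z + v)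
    have h2 := hΦconv.comp_affineMap (AffineMap.lineMap z (z + v))
    have h3 : (Φ ∘ (AffineMap.lineMap z (z + v)) : ℝ → ℝ) = φ := by
      funext t
      simp only [Function.comp_apply, AffineMap.lineMap_apply, hφ]
      rw [vsub_eq_sub, vadd_eq_add, add_sub_cancel_left, add_comm]
    rw [h3] at h2
    simpa using h2
  have hψmono : Monotone (deriv φ) := by
    have := hφconv.monotoneOn_deriv (fun x _ => (hφd x).differentiableAt)
    rw [← monotoneOn_univ]
    exact this
  have hderiv_eq : deriv φ = fun t => D (z + t • v) := by
    funext t; exact (hφd t).deriv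
  have hψd : HasDerivAt (deriv φ) (fderiv ℝ D z v) 0 := by
    rw [hderiv_eq]
    have h4 : HasDerivAt (fun t : ℝ => D (z + t • v)) (fderiv ℝ D (z + (0:ℝ) • v) v) 0 :=
      ((hDsmooth.differentiable (by simp)) _).hasFDerivAt.comp_hasDerivAt 0 (line_hasDerivAt z v 0)
    simpa using h4
  exact monotone_hasDerivAt_nonneg hψmono hψd



section helpers
variable {d : ℕ}

lemma fderiv_apply_eq_inner_gradient (f : EuclideanSpace ℝ (Fin d) → ℝ)
    (z w : EuclideanSpace ℝ (Fin d)) : fderiv ℝ f z w = ⟪gradient f z, w⟫ := by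
  rw [gradient, InnerProductSpace.toDual_symm_apply]

lemma abs_fderiv_apply_le (f : EuclideanSpace ℝ (Fin d) → ℝ) (z : EuclideanSpace ℝ (Fin d))
    (i : Fin d) : |fderiv ℝ f z (EuclideanSpace.single i (1:ℝ))| ≤ ‖gradient f z‖ := by
  rw [fderiv_apply_eq_inner_gradient]
  refine le_trans (abs_real_inner_le_norm _ _) ?_
  rw [EuclideanSpace.norm_single]
  simp

lemma update_eq_line (x : Fin d → ℝ) (i : Fin d) (t : ℝ) :
    ((MeasurableEquiv.toLp 2 (Fin d → ℝ)) (Function.update x i t)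
        : EuclideanSpace ℝ (Fin d))
      = (MeasurableEquiv.toLp 2 (Fin d → ℝ)) (Function.update x i 0)
        + t • EuclideanSpace.single i (1:ℝ) := by
  ext j
  simp only [MeasurableEquiv.toLp_apply, PiLp.toLp_apply,
    PiLp.add_apply, PiLp.smul_apply, EuclideanSpace.single_apply, smul_eq_mul]
  by_cases hj : j = i
  · subst hj; simp [Function.update]
  · simp [Function.update, hj]

lemma lintegral_euclidean_eq (G : EuclideanSpace ℝ (Fin d) → ℝ≥0∞) (hG : Measurable G) :
    ∫⁻ x : Fin d → ℝ, G ((MeasurableEquiv.toLp 2 (Fin d → ℝ)) x) = ∫⁻ z, G z :=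
  MeasurePreserving.lintegral_comp
    (PiLp.volume_preserving_toLp (Fin d)) hG

lemma line_hasDerivAt' (z v : EuclideanSpace ℝ (Fin d)) (t : ℝ) :
    HasDerivAt (fun t : ℝ => z + t • v) v t := by
  simpa using ((hasDerivAt_id t).smul_const v).const_add z

end helpers


lemma coordinate_bound {d : ℕ} (V₁ : EuclideanSpace ℝ (Fin d) → ℝ)
    (hV1smooth : ContDiff ℝ (⊤ : ℕ∞) V₁)
    (Φ : EuclideanSpace ℝ (Fin d) → ℝ) (hΦsmooth : ContDiff ℝ (⊤ : ℕ∞) Φ)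
    (hΦconv : ConvexOn ℝ Set.univ Φ)
    (R : ℝ) (hR : 0 ≤ R) (hΦgrad : ∀ x, ‖gradient Φ x‖ ≤ R)
    (y : EuclideanSpace ℝ (Fin d)) (i : Fin d)
    (hWfin : ∫⁻ z, ENNReal.ofReal (Real.exp (-(V₁ z))) ≠ ⊤)
    (hV1Wfin : ∫⁻ z, ENNReal.ofReal (‖gradient V₁ z‖ * Real.exp (-(V₁ z))) ≠ ⊤)
    (hH : ∀ z, 0 ≤ fderiv ℝ (fun w => fderiv ℝ Φ w (EuclideanSpace.single i (1:ℝ))) z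
        (EuclideanSpace.single i (1:ℝ))) :
    ∫⁻ z, ENNReal.ofReal (Real.exp (-(V₁ z)) *
        fderiv ℝ (fun w => fderiv ℝ Φ w (EuclideanSpace.single i (1:ℝ))) (z + y)
          (EuclideanSpace.single i (1:ℝ)))
      ≤ ∫⁻ z, ENNReal.ofReal |fderiv ℝ V₁ z (EuclideanSpace.single i (1:ℝ)) *
          Real.exp (-(V₁ z)) *
          fderiv ℝ Φ (z + y) (EuclideanSpace.single i (1:ℝ))| := by
  classical
  set e : EuclideanSpace ℝ (Fin d) := EuclideanSpace.single i (1:ℝ) with he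
  set W : EuclideanSpace ℝ (Fin d) → ℝ := fun z => Real.exp (-(V₁ z)) with hWdef
  set D : EuclideanSpace ℝ (Fin d) → ℝ := fun w => fderiv ℝ Φ w e with hDdef
  set Hf : EuclideanSpace ℝ (Fin d) → ℝ := fun z => fderiv ℝ D z e with hHfdef
  set ι : (Fin d → ℝ) → EuclideanSpace ℝ (Fin d) := ⇑(MeasurableEquiv.toLp 2 (Fin d → ℝ)) with hι
  -- continuity facts
  have hWc : Continuous W := Real.continuous_exp.comp (hV1smooth.continuous.neg)
  have hWpos : ∀ z, 0 < W z := fun z => Real.exp_pos _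
  have hDsm : ContDiff ℝ (⊤ : ℕ∞) D := (hΦsmooth.fderiv_right (by simp)).clm_apply contDiff_const
  have hDc : Continuous D := hDsm.continuous
  have hHfsm : ContDiff ℝ (⊤ : ℕ∞) Hf := (hDsm.fderiv_right (by simp)).clm_apply contDiff_const
  have hHfc : Continuous Hf := hHfsm.continuous
  have hdV1sm : ContDiff ℝ (⊤ : ℕ∞) (fun z : EuclideanSpace ℝ (Fin d) => fderiv ℝ V₁ z e) :=
    (hV1smooth.fderiv_right (by simp)).clm_apply contDiff_const
  have hdV1c : Continuous (fun z : EuclideanSpace ℝ (Fin d) => fderiv ℝ V₁ z e) := hdV1sm.continuous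
  have hgradV1c : Continuous (fun z : EuclideanSpace ℝ (Fin d) => gradient V₁ z) := by
    have h0 : ContDiff ℝ (⊤ : ℕ∞) (fderiv ℝ V₁) := hV1smooth.fderiv_right (by simp)
    have : Continuous (fderiv ℝ V₁) := h0.continuous
    exact (LinearIsometryEquiv.continuous _).comp this
  have hDle : ∀ z, |D z| ≤ R := by
    intro z
    refine le_trans (abs_fderiv_apply_le Φ z i) (hΦgrad z)
  have hdV1le : ∀ z, |fderiv ℝ V₁ z e| ≤ ‖gradient V₁ z‖ := fun z => abs_fderiv_apply_le V₁ z i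
  -- the E-level integrands
  set aE : EuclideanSpace ℝ (Fin d) → ℝ := fun z => W z * Hf (z + y) with haE
  set bE : EuclideanSpace ℝ (Fin d) → ℝ := fun z => fderiv ℝ V₁ z e * W z * D (z + y) with hbE
  set cE : EuclideanSpace ℝ (Fin d) → ℝ := fun z => R * W z with hcE
  have haEc : Continuous aE := hWc.mul (hHfc.comp (continuous_id.add continuous_const))
  have hbEc : Continuous bE :=
    (hdV1c.mul hWc).mul (hDc.comp (continuous_id.add continuous_const))
  have hcEc : Continuous cE := continuous_const.mul hWc
  -- pi-level functions
  set A : (Fin d → ℝ) → ℝ≥0∞ := fun x => ENNReal.ofReal (aE (ι x)) with hA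
  set B : (Fin d → ℝ) → ℝ≥0∞ := fun x => ENNReal.ofReal |bE (ι x)| with hB
  set C : (Fin d → ℝ) → ℝ≥0∞ := fun x => ENNReal.ofReal (cE (ι x)) with hC
  have hιm : Measurable ι := (MeasurableEquiv.toLp 2 (Fin d → ℝ)).measurable
  have hAm : Measurable A := (haEc.measurable.ennreal_ofReal).comp hιm
  have hBm : Measurable B := (hbEc.abs.measurable.ennreal_ofReal).comp hιm
  have hCm : Measurable C := (hcEc.measurable.ennreal_ofReal).comp hιm
  -- transfer lemmas
  have htransA : ∫⁻ x, A x = ∫⁻ z, ENNReal.ofReal (aE z) :=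
    lintegral_euclidean_eq _ (haEc.measurable.ennreal_ofReal)
  have htransB : ∫⁻ x, B x = ∫⁻ z, ENNReal.ofReal |bE z| :=
    lintegral_euclidean_eq _ (hbEc.abs.measurable.ennreal_ofReal)
  have htransC : ∫⁻ x, C x = ∫⁻ z, ENNReal.ofReal (cE z) :=
    lintegral_euclidean_eq _ (hcEc.measurable.ennreal_ofReal)
  suffices hfinal : ∫⁻ z, ENNReal.ofReal (aE z) ≤ ∫⁻ z, ENNReal.ofReal |bE z| by
    simpa only [haE, hbE, hHfdef, hDdef, hWdef, he] using hfinal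
  -- finiteness of B
  have hBfin : ∫⁻ x, B x ≠ ⊤ := by
    rw [htransB]
    have hpt : ∀ z, ENNReal.ofReal |bE z|
        ≤ ENNReal.ofReal R * ENNReal.ofReal (‖gradient V₁ z‖ * W z) := by
      intro z
      rw [← ENNReal.ofReal_mul hR]
      refine ENNReal.ofReal_le_ofReal ?_
      have h1 : |bE z| = |fderiv ℝ V₁ z e| * W z * |D (z + y)| := by
        rw [hbE]
        rw [abs_mul, abs_mul, abs_of_pos (hWpos z)]
      rw [h1]
      refine le_trans ?_
        (le_of_eq (by ring : ‖gradient V₁ z‖ * W z * R = R * (‖gradient V₁ z‖ * W z)))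
      refine mul_le_mul (mul_le_mul (hdV1le z) le_rfl (hWpos z).le (norm_nonneg _))
        (hDle _) (abs_nonneg _) ?_
      exact mul_nonneg (norm_nonneg _) (hWpos z).le
    refine ne_top_of_le_ne_top ?_ (lintegral_mono hpt)
    rw [lintegral_const_mul' _ _ ENNReal.ofReal_ne_top]
    exact ENNReal.mul_ne_top ENNReal.ofReal_ne_top hV1Wfin
  have hCfin : ∫⁻ x, C x ≠ ⊤ := by
    rw [htransC]
    have : ∀ z, ENNReal.ofReal (cE z) = ENNReal.ofReal R * ENNReal.ofReal (W z) := by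
      intro z; rw [hcE, ← ENNReal.ofReal_mul hR]
    simp only [this]
    rw [lintegral_const_mul' _ _ ENNReal.ofReal_ne_top]
    exact ENNReal.mul_ne_top ENNReal.ofReal_ne_top hWfin
  -- the slice inequality
  have hslice : ∫⁻ x, A x ≤ ∫⁻ x, B x := by
    refine slice_lintegral_le A B C hAm hBm hCm hBfin hCfin i ?_
    intro x hBx hCx
    set z₀ : EuclideanSpace ℝ (Fin d) := ι (Function.update x i 0) with hz₀
    have hline : ∀ t : ℝ, ι (Function.update x i t) = z₀ + t • e := fun t => update_eq_line x i t
    set g : ℝ → ℝ := fun t => W (z₀ + t • e) * D (z₀ + t • e + y) with hg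
    set p : ℝ → ℝ := fun t => W (z₀ + t • e) * Hf (z₀ + t • e + y) with hpdef
    set hfun : ℝ → ℝ := fun t => bE (z₀ + t • e) with hhdef
    have hlc : Continuous (fun t : ℝ => z₀ + t • e) :=
      continuous_const.add (continuous_id.smul continuous_const)
    have hlc' : Continuous (fun t : ℝ => z₀ + t • e + y) := hlc.add continuous_const
    have hpc : Continuous p := (hWc.comp hlc).mul (hHfc.comp hlc')
    have hhc : Continuous hfun := hbEc.comp hlc
    have hgder : ∀ t, HasDerivAt g (p t - hfun t) t := by
      intro t
      have hdl : HasDerivAt (fun t : ℝ => z₀ + t • e) e t := line_hasDerivAt' z₀ e t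
      have hdly : HasDerivAt (fun t : ℝ => z₀ + t • e + y) e t := hdl.add_const y
      have hdV : HasDerivAt (fun t : ℝ => V₁ (z₀ + t • e)) (fderiv ℝ V₁ (z₀ + t • e) e) t :=
        ((hV1smooth.differentiable (by simp)) _).hasFDerivAt.comp_hasDerivAt t hdl
      have hdW : HasDerivAt (fun t : ℝ => W (z₀ + t • e))
          (Real.exp (-(V₁ (z₀ + t • e))) * -(fderiv ℝ V₁ (z₀ + t • e) e)) t := hdV.neg.exp
      have hdD : HasDerivAt (fun t : ℝ => D (z₀ + t • e + y))
          (fderiv ℝ D (z₀ + t • e + y) e) t :=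
        ((hDsm.differentiable (by simp)) _).hasFDerivAt.comp_hasDerivAt t hdly
      have := hdW.mul hdD
      convert this using 1
      case e'_4 => rfl
      case e'_5 => rfl
      case e'_8 => rfl
      rw [hpdef, hhdef, hbE, hHfdef, hWdef]
      simp only
      ring
    have hp0 : ∀ t, 0 ≤ p t := by
      intro t
      exact mul_nonneg (hWpos _).le (hH _)
    have hgint : ∫⁻ t, ENNReal.ofReal |g t| ≠ ⊤ := by
      refine ne_top_of_le_ne_top hCx (lintegral_mono fun t => ?_)
      have h2 : C (Function.update x i t) = ENNReal.ofReal (R * W (z₀ + t • e)) := by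
        rw [hC, hcE]; simp only [hline t]
      rw [h2]
      refine ENNReal.ofReal_le_ofReal ?_
      have h1 : |g t| = W (z₀ + t • e) * |D (z₀ + t • e + y)| := by
        simp only [hg, abs_mul, abs_of_pos (hWpos (z₀ + t • e))]
      rw [h1, mul_comm]
      exact mul_le_mul_of_nonneg_right (hDle _) (hWpos _).le
    have hone := oneDim hpc hhc hgder hp0 hgint
    have hAline : ∀ t, A (Function.update x i t) = ENNReal.ofReal (p t) := by
      intro t; rw [hA, haE]; simp only [hline t, hpdef]
    have hBline : ∀ t, B (Function.update x i t) = ENNReal.ofReal |hfun t| := by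
      intro t; rw [hB]; simp only [hline t, hhdef]
    simp only [hAline, hBline]
    exact hone
  rw [← htransA, ← htransB]
  exact hslice

/-- Lemma 3 (smooth case): if `μ = e^{-V} dx` is a probability measure with `V = V₀ + V₁`,
`|V₀| ≤ c`, `∫ |∇V₁| dμ < ∞`, and `Φ` is smooth convex with `|∇Φ| ≤ R`, then
`∫ e^{-V(x)} ΔΦ(x+y) dx ≤ e^{2c} R ∫ |∇V₁| dμ` uniformly in `y`. -/
theorem laplacian_translate_integral_bound
    {d : ℕ} (V V₀ V₁ : EuclideanSpace ℝ (Fin d) → ℝ) (c R : ℝ)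
    (μ : Measure (EuclideanSpace ℝ (Fin d))) [IsProbabilityMeasure μ]
    (hμ : μ = volume.withDensity fun x => ENNReal.ofReal (Real.exp (-V x)))
    (hVsum : V = V₀ + V₁)
    (hV0 : ∀ x, |V₀ x| ≤ c)
    (hV1smooth : ContDiff ℝ (⊤ : ℕ∞) V₁)
    (hV1int : Integrable (fun x => ‖gradient V₁ x‖) μ)
    (Φ : EuclideanSpace ℝ (Fin d) → ℝ)
    (hΦsmooth : ContDiff ℝ (⊤ : ℕ∞) Φ)
    (hΦconv : ConvexOn ℝ Set.univ Φ)
    (hΦgrad : ∀ x, ‖gradient Φ x‖ ≤ R) :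
    ∀ y : EuclideanSpace ℝ (Fin d),
      ∫ x, Real.exp (-V x) * euclideanLaplacian Φ (x + y)
        ≤ Real.exp (2 * c) * R * ∫ x, ‖gradient V₁ x‖ ∂μ := by
  intro y
  classical
  set W : EuclideanSpace ℝ (Fin d) → ℝ := fun z => Real.exp (-(V₁ z)) with hWdef
  have hWc : Continuous W := Real.continuous_exp.comp (hV1smooth.continuous.neg)
  have hWm : Measurable fun z => ENNReal.ofReal (W z) := hWc.measurable.ennreal_ofReal
  have hWpos : ∀ z, 0 < W z := fun z => Real.exp_pos _
  have hR : 0 ≤ R := le_trans (norm_nonneg _) (hΦgrad 0)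
  have hI0 : 0 ≤ ∫ z, ‖gradient V₁ z‖ ∂μ := integral_nonneg fun z => norm_nonneg _
  have hRHS0 : 0 ≤ Real.exp (2 * c) * R * ∫ z, ‖gradient V₁ z‖ ∂μ := by positivity
  -- total mass of the density
  have hμuniv : ∫⁻ z, ENNReal.ofReal (Real.exp (-V z)) = 1 := by
    have h := measure_univ (μ := μ)
    rw [hμ, withDensity_apply _ MeasurableSet.univ, Measure.restrict_univ] at h
    exact h
  -- pointwise density comparisons
  have hWρ : ∀ z, W z ≤ Real.exp c * Real.exp (-V z) := by
    intro z
    rw [hWdef]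
    simp only [← Real.exp_add]
    apply Real.exp_le_exp.2
    have h1 : V z = V₀ z + V₁ z := by rw [hVsum]; rfl
    have h2 := (abs_le.1 (hV0 z)).2
    linarith
  have hρW : ∀ z, Real.exp (-V z) ≤ Real.exp c * W z := by
    intro z
    rw [hWdef]
    simp only [← Real.exp_add]
    apply Real.exp_le_exp.2
    have h1 : V z = V₀ z + V₁ z := by rw [hVsum]; rfl
    have h2 := (abs_le.1 (hV0 z)).1
    linarith
  -- measure comparison: withDensity W ≤ e^c • μ
  set νW : Measure (EuclideanSpace ℝ (Fin d)) :=
    volume.withDensity (fun z => ENNReal.ofReal (W z)) with hνdef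
  have hνμ : νW ≤ (ENNReal.ofReal (Real.exp c)) • μ := by
    rw [Measure.le_iff]
    intro A hA
    rw [hνdef, withDensity_apply _ hA, Measure.smul_apply, smul_eq_mul, hμ,
      withDensity_apply _ hA, ← lintegral_const_mul' _ _ ENNReal.ofReal_ne_top]
    refine lintegral_mono fun z => ?_
    rw [← ENNReal.ofReal_mul (Real.exp_nonneg c)]
    exact ENNReal.ofReal_le_ofReal (hWρ z)
  have hWfin : ∫⁻ z, ENNReal.ofReal (W z) ≠ ⊤ := by
    have h1 : ∫⁻ z, ENNReal.ofReal (W z) = νW Set.univ := by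
      rw [hνdef, withDensity_apply _ MeasurableSet.univ, Measure.restrict_univ]
    rw [h1]
    refine ne_top_of_le_ne_top ?_ (hνμ Set.univ)
    rw [Measure.smul_apply, smul_eq_mul, measure_univ, mul_one]
    exact ENNReal.ofReal_ne_top
  -- gradient integral facts
  have hgradc : Continuous fun z => ‖gradient V₁ z‖ := by
    have h0 : ContDiff ℝ (⊤ : ℕ∞) (fderiv ℝ V₁) := hV1smooth.fderiv_right (by simp)
    exact ((LinearIsometryEquiv.continuous _).comp h0.continuous).norm
  have hgradμ : ∫⁻ z, ENNReal.ofReal ‖gradient V₁ z‖ ∂μ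
      = ENNReal.ofReal (∫ z, ‖gradient V₁ z‖ ∂μ) :=
    (ofReal_integral_eq_lintegral_ofReal hV1int (ae_of_all _ fun z => norm_nonneg _)).symm
  have hK2 : ∫⁻ z, ENNReal.ofReal (‖gradient V₁ z‖ * W z)
      ≤ ENNReal.ofReal (Real.exp c) * ∫⁻ z, ENNReal.ofReal ‖gradient V₁ z‖ ∂μ := by
    have h1 : ∫⁻ z, ENNReal.ofReal (‖gradient V₁ z‖ * W z)
        = ∫⁻ z, ENNReal.ofReal ‖gradient V₁ z‖ ∂νW := by
      rw [hνdef, lintegral_withDensity_eq_lintegral_mul _ hWm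
        (hgradc.measurable.ennreal_ofReal)]
      refine lintegral_congr fun z => ?_
      simp only [Pi.mul_apply]
      rw [ENNReal.ofReal_mul (norm_nonneg _), mul_comm]
    rw [h1]
    calc ∫⁻ z, ENNReal.ofReal ‖gradient V₁ z‖ ∂νW
        ≤ ∫⁻ z, ENNReal.ofReal ‖gradient V₁ z‖ ∂((ENNReal.ofReal (Real.exp c)) • μ) :=
          lintegral_mono' hνμ le_rfl
      _ = ENNReal.ofReal (Real.exp c) * ∫⁻ z, ENNReal.ofReal ‖gradient V₁ z‖ ∂μ :=
          lintegral_smul_measure _ _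
  have hV1Wfin : ∫⁻ z, ENNReal.ofReal (‖gradient V₁ z‖ * W z) ≠ ⊤ := by
    refine ne_top_of_le_ne_top ?_ hK2
    refine ENNReal.mul_ne_top ENNReal.ofReal_ne_top ?_
    rw [hgradμ]
    exact ENNReal.ofReal_ne_top
  -- second derivatives
  set Hf : Fin d → EuclideanSpace ℝ (Fin d) → ℝ := fun i z =>
    fderiv ℝ (fun w => fderiv ℝ Φ w (EuclideanSpace.single i 1)) z
      (EuclideanSpace.single i 1) with hHfdef
  have hH : ∀ i z, 0 ≤ Hf i z := fun i z =>
    second_deriv_nonneg hΦsmooth hΦconv (EuclideanSpace.single i 1) z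
  have hLapeq : ∀ z, euclideanLaplacian Φ z = ∑ i : Fin d, Hf i z := fun z => rfl
  have hLap0 : ∀ z, 0 ≤ euclideanLaplacian Φ z := by
    intro z; rw [hLapeq]; exact Finset.sum_nonneg fun i _ => hH i z
  have hHc : ∀ i : Fin d, Continuous (Hf i) := by
    intro i
    have hDsm : ContDiff ℝ (⊤ : ℕ∞) (fun w => fderiv ℝ Φ w (EuclideanSpace.single i 1)) :=
      (hΦsmooth.fderiv_right (by simp)).clm_apply contDiff_const
    have hHsm : ContDiff ℝ (⊤ : ℕ∞) (Hf i) := (hDsm.fderiv_right (by simp)).clm_apply contDiff_const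
    exact hHsm.continuous
  -- coordinate fderiv of Φ and V₁
  set DΦ : Fin d → EuclideanSpace ℝ (Fin d) → ℝ := fun i w =>
    fderiv ℝ Φ w (EuclideanSpace.single i 1) with hDΦdef
  set DV : Fin d → EuclideanSpace ℝ (Fin d) → ℝ := fun i z =>
    fderiv ℝ V₁ z (EuclideanSpace.single i 1) with hDVdef
  have hDΦc : ∀ i, Continuous (DΦ i) := fun i =>
    (((hΦsmooth.fderiv_right (by simp)).clm_apply contDiff_const) : ContDiff ℝ (⊤ : ℕ∞) (DΦ i)).continuous
  have hDVc : ∀ i, Continuous (DV i) := fun i =>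
    (((hV1smooth.fderiv_right (by simp)).clm_apply contDiff_const) : ContDiff ℝ (⊤ : ℕ∞) (DV i)).continuous
  -- per-coordinate bound
  have hcoord : ∀ i : Fin d,
      ∫⁻ z, ENNReal.ofReal (W z * Hf i (z + y))
        ≤ ∫⁻ z, ENNReal.ofReal |DV i z * W z * DΦ i (z + y)| := by
    intro i
    exact coordinate_bound V₁ hV1smooth Φ hΦsmooth hΦconv R hR hΦgrad y i hWfin hV1Wfin
      (fun z => hH i z)
  -- Cauchy-Schwarz bound on the sum
  have hCS : ∀ z, ∑ i : Fin d, |DV i z * W z * DΦ i (z + y)|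
      ≤ R * (‖gradient V₁ z‖ * W z) := by
    intro z
    have h1 : ∀ i : Fin d, |DV i z * W z * DΦ i (z + y)|
        = (|DV i z| * |DΦ i (z + y)|) * W z := by
      intro i
      rw [abs_mul, abs_mul, abs_of_pos (hWpos z)]
      ring
    rw [Finset.sum_congr rfl fun i _ => h1 i, ← Finset.sum_mul]
    have hsum : ∑ i : Fin d, |DV i z| * |DΦ i (z + y)|
        ≤ ‖gradient V₁ z‖ * ‖gradient Φ (z + y)‖ := by
      set u' : EuclideanSpace ℝ (Fin d) :=
        (WithLp.equiv 2 (Fin d → ℝ)).symm (fun i => |DV i z|) with hu'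
      set v' : EuclideanSpace ℝ (Fin d) :=
        (WithLp.equiv 2 (Fin d → ℝ)).symm (fun i => |DΦ i (z + y)|) with hv'
      have h := real_inner_le_norm (F := EuclideanSpace ℝ (Fin d)) u' v'
      rw [PiLp.inner_apply] at h
      simp only [RCLike.inner_apply, conj_trivial] at h
      have hui : ∀ j, u' j = |DV j z| := fun j => rfl
      have hvi : ∀ j, v' j = |DΦ j (z + y)| := fun j => rfl
      have hn1 : ‖u'‖ ≤ ‖gradient V₁ z‖ := by
        rw [EuclideanSpace.norm_eq]
        rw [EuclideanSpace.norm_eq (gradient V₁ z)]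
        apply Real.sqrt_le_sqrt
        refine Finset.sum_le_sum fun j _ => ?_
        rw [hui]
        have : |DV j z| ≤ ‖(gradient V₁ z) j‖ := by
          rw [hDVdef]
          simp only
          rw [fderiv_apply_eq_inner_gradient V₁ z (EuclideanSpace.single j 1),
            EuclideanSpace.inner_single_right]
          simp [Real.norm_eq_abs]
        have h0 : (0:ℝ) ≤ |DV j z| := abs_nonneg _
        calc ‖|DV j z|‖ ^ 2 = |DV j z| ^ 2 := by rw [Real.norm_eq_abs, abs_abs]
          _ ≤ ‖(gradient V₁ z) j‖ ^ 2 := by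
              apply sq_le_sq' <;> [linarith [norm_nonneg ((gradient V₁ z) j)]; exact this]
      have hn2 : ‖v'‖ ≤ ‖gradient Φ (z + y)‖ := by
        rw [EuclideanSpace.norm_eq]
        rw [EuclideanSpace.norm_eq (gradient Φ (z + y))]
        apply Real.sqrt_le_sqrt
        refine Finset.sum_le_sum fun j _ => ?_
        rw [hvi]
        have : |DΦ j (z + y)| ≤ ‖(gradient Φ (z + y)) j‖ := by
          rw [hDΦdef]
          simp only
          rw [fderiv_apply_eq_inner_gradient Φ (z + y) (EuclideanSpace.single j 1),
            EuclideanSpace.inner_single_right]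
          simp [Real.norm_eq_abs]
        calc ‖|DΦ j (z + y)|‖ ^ 2 = |DΦ j (z + y)| ^ 2 := by rw [Real.norm_eq_abs, abs_abs]
          _ ≤ ‖(gradient Φ (z + y)) j‖ ^ 2 := by
              apply sq_le_sq' <;>
                [linarith [norm_nonneg ((gradient Φ (z + y)) j), abs_nonneg (DΦ j (z + y))];
                 exact this]
      calc ∑ i : Fin d, |DV i z| * |DΦ i (z + y)| = ∑ i : Fin d, u' i * v' i := by
            refine Finset.sum_congr rfl fun j _ => by rw [hui, hvi]
        _ ≤ ‖u'‖ * ‖v'‖ := by simpa only [mul_comm] using h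
        _ ≤ ‖gradient V₁ z‖ * ‖gradient Φ (z + y)‖ := by
            apply mul_le_mul hn1 hn2 (norm_nonneg _) (norm_nonneg _)
    calc (∑ i : Fin d, |DV i z| * |DΦ i (z + y)|) * W z
        ≤ (‖gradient V₁ z‖ * ‖gradient Φ (z + y)‖) * W z :=
          mul_le_mul_of_nonneg_right hsum (hWpos z).le
      _ ≤ (‖gradient V₁ z‖ * R) * W z := by
          refine mul_le_mul_of_nonneg_right ?_ (hWpos z).le
          exact mul_le_mul_of_nonneg_left (hΦgrad _) (norm_nonneg _)
      _ = R * (‖gradient V₁ z‖ * W z) := by ring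
  -- main chain of inequalities in ℝ≥0∞
  have main : ∫⁻ z, ENNReal.ofReal (Real.exp (-V z) * euclideanLaplacian Φ (z + y))
      ≤ ENNReal.ofReal (Real.exp (2 * c) * R * ∫ z, ‖gradient V₁ z‖ ∂μ) := by
    have step1 : ∫⁻ z, ENNReal.ofReal (Real.exp (-V z) * euclideanLaplacian Φ (z + y))
        ≤ ENNReal.ofReal (Real.exp c) *
          ∫⁻ z, ENNReal.ofReal (W z * euclideanLaplacian Φ (z + y)) := by
      rw [← lintegral_const_mul' _ _ ENNReal.ofReal_ne_top]
      refine lintegral_mono fun z => ?_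
      rw [← ENNReal.ofReal_mul (Real.exp_nonneg c)]
      refine ENNReal.ofReal_le_ofReal ?_
      calc Real.exp (-V z) * euclideanLaplacian Φ (z + y)
          ≤ (Real.exp c * W z) * euclideanLaplacian Φ (z + y) :=
            mul_le_mul_of_nonneg_right (hρW z) (hLap0 _)
        _ = Real.exp c * (W z * euclideanLaplacian Φ (z + y)) := by ring
    have step2 : ∫⁻ z, ENNReal.ofReal (W z * euclideanLaplacian Φ (z + y))
        = ∑ i : Fin d, ∫⁻ z, ENNReal.ofReal (W z * Hf i (z + y)) := by
      rw [← lintegral_finset_sum]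
      · refine lintegral_congr fun z => ?_
        rw [hLapeq (z + y), Finset.mul_sum]
        rw [ENNReal.ofReal_sum_of_nonneg fun i _ => mul_nonneg (hWpos z).le (hH i _)]
      · intro i _
        exact (hWc.mul ((hHc i).comp (continuous_id.add continuous_const))).measurable.ennreal_ofReal
    have step3 : ∑ i : Fin d, ∫⁻ z, ENNReal.ofReal (W z * Hf i (z + y))
        ≤ ∫⁻ z, ENNReal.ofReal (R * (‖gradient V₁ z‖ * W z)) := by
      calc ∑ i : Fin d, ∫⁻ z, ENNReal.ofReal (W z * Hf i (z + y))
          ≤ ∑ i : Fin d, ∫⁻ z, ENNReal.ofReal |DV i z * W z * DΦ i (z + y)| :=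
            Finset.sum_le_sum fun i _ => hcoord i
        _ = ∫⁻ z, ∑ i : Fin d, ENNReal.ofReal |DV i z * W z * DΦ i (z + y)| := by
            rw [lintegral_finset_sum]
            intro i _
            exact ((((hDVc i).mul hWc).mul
              ((hDΦc i).comp (continuous_id.add continuous_const))).abs).measurable.ennreal_ofReal
        _ ≤ ∫⁻ z, ENNReal.ofReal (R * (‖gradient V₁ z‖ * W z)) := by
            refine lintegral_mono fun z => ?_
            rw [← ENNReal.ofReal_sum_of_nonneg fun i _ => abs_nonneg _]
            exact ENNReal.ofReal_le_ofReal (hCS z)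
    have step4 : ∫⁻ z, ENNReal.ofReal (R * (‖gradient V₁ z‖ * W z))
        ≤ ENNReal.ofReal R * (ENNReal.ofReal (Real.exp c) *
          ENNReal.ofReal (∫ z, ‖gradient V₁ z‖ ∂μ)) := by
      have h1 : ∫⁻ z, ENNReal.ofReal (R * (‖gradient V₁ z‖ * W z))
          = ENNReal.ofReal R * ∫⁻ z, ENNReal.ofReal (‖gradient V₁ z‖ * W z) := by
        rw [← lintegral_const_mul' _ _ ENNReal.ofReal_ne_top]
        refine lintegral_congr fun z => ?_
        rw [← ENNReal.ofReal_mul hR]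
      rw [h1, ← hgradμ]
      exact mul_le_mul_right hK2 _
    calc ∫⁻ z, ENNReal.ofReal (Real.exp (-V z) * euclideanLaplacian Φ (z + y))
        ≤ ENNReal.ofReal (Real.exp c) *
          ∫⁻ z, ENNReal.ofReal (W z * euclideanLaplacian Φ (z + y)) := step1
      _ = ENNReal.ofReal (Real.exp c) *
          ∑ i : Fin d, ∫⁻ z, ENNReal.ofReal (W z * Hf i (z + y)) := by rw [step2]
      _ ≤ ENNReal.ofReal (Real.exp c) *
          (ENNReal.ofReal R * (ENNReal.ofReal (Real.exp c) *
            ENNReal.ofReal (∫ z, ‖gradient V₁ z‖ ∂μ))) :=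
          mul_le_mul_right (le_trans step3 step4) _
      _ = ENNReal.ofReal (Real.exp (2 * c) * R * ∫ z, ‖gradient V₁ z‖ ∂μ) := by
          rw [show Real.exp (2 * c) * R * (∫ z, ‖gradient V₁ z‖ ∂μ)
              = Real.exp c * (R * (Real.exp c * ∫ z, ‖gradient V₁ z‖ ∂μ)) by
            rw [two_mul, Real.exp_add]; ring]
          rw [ENNReal.ofReal_mul (Real.exp_nonneg c), ENNReal.ofReal_mul hR,
            ENNReal.ofReal_mul (Real.exp_nonneg c)]
  -- conclude
  by_cases hInt : Integrable (fun x => Real.exp (-V x) * euclideanLaplacian Φ (x + y)) volume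
  · rw [integral_eq_lintegral_of_nonneg_ae
      (ae_of_all _ fun z => mul_nonneg (Real.exp_pos _).le (hLap0 _))
      hInt.aestronglyMeasurable]
    calc (∫⁻ z, ENNReal.ofReal (Real.exp (-V z) * euclideanLaplacian Φ (z + y))).toReal
        ≤ (ENNReal.ofReal (Real.exp (2 * c) * R * ∫ z, ‖gradient V₁ z‖ ∂μ)).toReal :=
          ENNReal.toReal_mono ENNReal.ofReal_ne_top main
      _ = Real.exp (2 * c) * R * ∫ z, ‖gradient V₁ z‖ ∂μ := ENNReal.toReal_ofReal hRHS0
  · rw [integral_undef hInt]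
    exact hRHS0
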